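/- Let X, Y, U, V be real g×g matrices and let A, B, C, D be g×g integer matrices satisfying the symplectic relations. If A·X + B·Y = 0, then (C·X + D·Y)ᵀ·(A·U + B·V) = Yᵀ·U − Xᵀ·V. In particular, if moreover A·U + B·V and C·X + D·Y are both invertible, then the matrix Yᵀ·U − Xᵀ·V is invertible. -/

import Mathlib

/-!
The block matrix `M = [[A, B], [C, D]]` is symplectic, i.e. `Mᵀ J M = J` for
`J = [[0, 1], [-1, 0]]`, so it preserves the form `(Z, W) ↦ Zᵀ J W`. Applied to
`Z = [X; Y]` and `W = [U; V]`, and using that the first block row `A X + B Y` of `M Z`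
vanishes, this gives `(C X + D Y)ᵀ (A U + B V) = Yᵀ U - Xᵀ V`; a product of invertible
matrices is invertible.
-/

open Matrix

/-- Real matrix obtained from an integer matrix by coercion of the entries. -/
def intToReal {g : ℕ} (A : Matrix (Fin g) (Fin g) ℤ) : Matrix (Fin g) (Fin g) ℝ :=
  A.map (Int.cast : ℤ → ℝ)

structure SymplecticRelations {n R : Type*} [Fintype n] [DecidableEq n] [CommRing R]
    (A B C D : Matrix n n R) : Prop where
  transpose_mul_sub_eq_one : Aᵀ * D - Cᵀ * B = 1
  transpose_mul_symm_left : Aᵀ * C = Cᵀ * A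
  transpose_mul_symm_right : Dᵀ * B = Bᵀ * D

namespace SymplecticRelations

variable {n R S : Type*} [Fintype n] [DecidableEq n] [CommRing R] [CommRing S]
  {A B C D : Matrix n n R}

theorem map (h : SymplecticRelations A B C D) (f : R →+* S) :
    SymplecticRelations (A.map f) (B.map f) (C.map f) (D.map f) := by
  obtain ⟨h₁, h₂, h₃⟩ := h
  refine ⟨?_, ?_, ?_⟩
  · simpa only [map_sub, map_one, RingHom.mapMatrix_apply, Matrix.map_mul, transpose_map]
      using congrArg f.mapMatrix h₁
  · simpa only [Matrix.map_mul, transpose_map] using congrArg (·.map f) h₂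
  · simpa only [Matrix.map_mul, transpose_map] using congrArg (·.map f) h₃

theorem transpose_mul_sub_eq_neg_one (h : SymplecticRelations A B C D) :
    Bᵀ * C - Dᵀ * A = -1 := by
  rw [← neg_sub, ← transpose_one, ← h.transpose_mul_sub_eq_one]
  simp only [transpose_sub, transpose_mul, transpose_transpose]

theorem symplecticForm_invariant (h : SymplecticRelations A B C D) (X Y U V : Matrix n n R) :
    (A * X + B * Y)ᵀ * (C * U + D * V) - (C * X + D * Y)ᵀ * (A * U + B * V)
      = Xᵀ * V - Yᵀ * U := by
  calc _ = Xᵀ * (Aᵀ * C - Cᵀ * A) * U + Xᵀ * (Aᵀ * D - Cᵀ * B) * V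
          + Yᵀ * (Bᵀ * C - Dᵀ * A) * U + Yᵀ * (Bᵀ * D - Dᵀ * B) * V := by
        simp only [transpose_add, transpose_mul]; noncomm_ring
    _ = Xᵀ * V - Yᵀ * U := by
        rw [h.transpose_mul_symm_left, h.transpose_mul_sub_eq_one, h.transpose_mul_sub_eq_neg_one,
          h.transpose_mul_symm_right]
        noncomm_ring

theorem transpose_mul_eq_of_mul_add_mul_eq_zero (h : SymplecticRelations A B C D)
    {X Y : Matrix n n R} (hXY : A * X + B * Y = 0) (U V : Matrix n n R) :
    (C * X + D * Y)ᵀ * (A * U + B * V) = Yᵀ * U - Xᵀ * V := by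
  have := h.symplecticForm_invariant X Y U V
  rw [hXY, transpose_zero, Matrix.zero_mul, zero_sub] at this
  rw [← neg_sub, ← this, neg_neg]

end SymplecticRelations

theorem key_identity_M_invertible_general
    (g : ℕ)
    (X Y U V : Matrix (Fin g) (Fin g) ℝ)
    (A B C D : Matrix (Fin g) (Fin g) ℤ)
    (hs1 : Aᵀ * D - Cᵀ * B = 1)
    (hs2 : Aᵀ * C = Cᵀ * A)
    (hs3 : Dᵀ * B = Bᵀ * D)
    (h1 : intToReal A * X + intToReal B * Y = 0) :
    (intToReal C * X + intToReal D * Y)ᵀ * (intToReal A * U + intToReal B * V)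
      = Yᵀ * U - Xᵀ * V
    ∧ (IsUnit (intToReal A * U + intToReal B * V) →
       IsUnit (intToReal C * X + intToReal D * Y) →
       IsUnit (Yᵀ * U - Xᵀ * V)) := by
  have hsymp := (SymplecticRelations.mk hs1 hs2 hs3).map (Int.castRingHom ℝ)
  have key := hsymp.transpose_mul_eq_of_mul_add_mul_eq_zero h1 U V
  refine ⟨key, fun hAU hCD => ?_⟩
  rw [← key]
  exact (isUnit_transpose _).mpr hCD |>.mul hAU

/-- Key computation in the proof of Proposition 4.1:
`(C·X + D·Y)ᵀ·(A·U + B·V) = Yᵀ·U − Xᵀ·V`, and invertibility of `Yᵀ·U − Xᵀ·V`. -/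
theorem key_identity_M_invertible
    (g : ℕ) (hg : 1 ≤ g)
    (X Y U V : Matrix (Fin g) (Fin g) ℝ)
    (A B C D : Matrix (Fin g) (Fin g) ℤ)
    (hs1 : Aᵀ * D - Cᵀ * B = 1)
    (hs2 : Aᵀ * C = Cᵀ * A)
    (hs3 : Dᵀ * B = Bᵀ * D)
    (h1 : intToReal A * X + intToReal B * Y = 0) :
    (intToReal C * X + intToReal D * Y)ᵀ * (intToReal A * U + intToReal B * V)
      = Yᵀ * U - Xᵀ * V
    ∧ (IsUnit (intToReal A * U + intToReal B * V) →
       IsUnit (intToReal C * X + intToReal D * Y) →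
       IsUnit (Yᵀ * U - Xᵀ * V)) :=
  key_identity_M_invertible_general g X Y U V A B C D hs1 hs2 hs3 h1
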